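/- arXiv:2511.12257 — 2 statements merged into one kernel-verified Lean document; each statement's English description precedes it below -/
import Mathlib

section
/- Let n be a positive integer, let 0 < ε ≤ C, let ρ > 0, β > 0, L ≥ 0, let D : ℝ^n → ℝ^n be L-Lipschitz with respect to the Euclidean norm, and let c ∈ ℝ^n be a fixed vector. Let ∇φ(z) = (−1/z_1, …, −1/z_n) denote the gradient of the Burg entropy φ(z) = −∑_{j=1}^n log z_j on ℝ_{++}^n, and define F : [ε, C]^n → ℝ^n by F(z) = β (z − D(z)) + (1/ρ − 1) ∇φ(z) + c. Then for all z, z′ ∈ [ε, C]^n, ⟨F(z) − F(z′), ∇φ(z) − ∇φ(z′)⟩ ≥ m ‖∇φ(z) − ∇φ(z′)‖_2², where m = 1/ρ − 1 + β ( ε⁴/C² − L C² ). -/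
open scoped BigOperators

/-- Verification of relative strong convexity (Assumption (A2)) for the
HRLwSGS algorithm with a RED potential: with
`F z = β (z - D z) + (1/ρ - 1) ∇φ(z) + c` and `∇φ(z) = (-1/z j)_j`, on the
box `[ε, C]^n` one has
`⟨F z - F z', ∇φ(z) - ∇φ(z')⟩ ≥ m ‖∇φ(z) - ∇φ(z')‖₂²` with
`m = 1/ρ - 1 + β (ε⁴/C² - L C²)`. -/
theorem red_relative_strong_convexity
    (n : ℕ) (hn : 0 < n) (ε C : ℝ) (hε : 0 < ε) (hεC : ε ≤ C)
    (ρ β L : ℝ) (hρ : 0 < ρ) (hβ : 0 < β) (hL : 0 ≤ L)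
    (D : (Fin n → ℝ) → (Fin n → ℝ))
    (hD : ∀ a b : Fin n → ℝ,
      Real.sqrt (∑ j, (D a j - D b j) ^ 2)
        ≤ L * Real.sqrt (∑ j, (a j - b j) ^ 2))
    (c : Fin n → ℝ)
    (F : (Fin n → ℝ) → (Fin n → ℝ))
    (hF : ∀ z : Fin n → ℝ, ∀ j,
      F z j = β * (z j - D z j) + (1 / ρ - 1) * (-(1 / z j)) + c j)
    (z z' : Fin n → ℝ)
    (hz : ∀ j, z j ∈ Set.Icc ε C) (hz' : ∀ j, z' j ∈ Set.Icc ε C) :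
    (1 / ρ - 1 + β * (ε ^ 4 / C ^ 2 - L * C ^ 2))
        * ∑ j, ((-(1 / z j)) - (-(1 / z' j))) ^ 2
      ≤ ∑ j, (F z j - F z' j) * ((-(1 / z j)) - (-(1 / z' j))) := by
  have hC : 0 < C := lt_of_lt_of_le hε hεC
  set u : Fin n → ℝ := fun j => (-(1 / z j)) - (-(1 / z' j)) with hu
  set S : ℝ := ∑ j, u j ^ 2 with hS
  have hzpos : ∀ j, 0 < z j := fun j => lt_of_lt_of_le hε (hz j).1
  have hz'pos : ∀ j, 0 < z' j := fun j => lt_of_lt_of_le hε (hz' j).1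
  have hzu : ∀ j, z j - z' j = z j * z' j * u j := by
    intro j
    have h1 := (hzpos j).ne'
    have h2 := (hz'pos j).ne'
    simp only [hu]; field_simp
    ring
  have hSnn : 0 ≤ S := Finset.sum_nonneg fun j _ => sq_nonneg _
  -- lower bound on ∑ (z-z')u
  have hbu : ε ^ 2 * S ≤ ∑ j, (z j - z' j) * u j := by
    rw [hS, Finset.mul_sum]
    apply Finset.sum_le_sum
    intro j _
    rw [hzu j]
    have : ε ^ 2 * u j ^ 2 ≤ (z j * z' j) * u j ^ 2 := by
      apply mul_le_mul_of_nonneg_right _ (sq_nonneg _)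
      nlinarith [(hz j).1, (hz' j).1, hε]
    nlinarith [this]
  -- upper bound on ∑ (z-z')²
  have hb2 : ∑ j, (z j - z' j) ^ 2 ≤ C ^ 4 * S := by
    rw [hS, Finset.mul_sum]
    apply Finset.sum_le_sum
    intro j _
    rw [hzu j]
    have h1 : z j * z' j ≤ C ^ 2 := by nlinarith [(hz j).2, (hz' j).2, (hzpos j), (hz'pos j)]
    have h0 : 0 ≤ z j * z' j := le_of_lt (mul_pos (hzpos j) (hz'pos j))
    calc (z j * z' j * u j) ^ 2 = (z j * z' j) ^ 2 * u j ^ 2 := by ring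
    _ ≤ C ^ 4 * u j ^ 2 := by
        have hsq : (z j * z' j) ^ 2 ≤ C ^ 4 := by nlinarith
        exact mul_le_mul_of_nonneg_right hsq (sq_nonneg _)
  -- Cauchy–Schwarz bound on ∑ (Dz - Dz')u
  have hau : ∑ j, (D z j - D z' j) * u j ≤ L * C ^ 2 * S := by
    have hcs := Finset.sum_mul_sq_le_sq_mul_sq Finset.univ
      (fun j => D z j - D z' j) u
    have h1 : ∑ j, (D z j - D z' j) * u j
        ≤ Real.sqrt (∑ j, (D z j - D z' j) ^ 2) * Real.sqrt S := by
      have := Real.sqrt_le_sqrt hcs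
      rw [Real.sqrt_mul (Finset.sum_nonneg fun j _ => sq_nonneg _)] at this
      calc ∑ j, (D z j - D z' j) * u j
          ≤ |∑ j, (D z j - D z' j) * u j| := le_abs_self _
        _ = Real.sqrt ((∑ j, (D z j - D z' j) * u j) ^ 2) := (Real.sqrt_sq_eq_abs _).symm
        _ ≤ _ := this
    have h2 : Real.sqrt (∑ j, (D z j - D z' j) ^ 2) ≤ L * (C ^ 2 * Real.sqrt S) := by
      refine (hD z z').trans ?_
      have : Real.sqrt (∑ j, (z j - z' j) ^ 2) ≤ C ^ 2 * Real.sqrt S := by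
        have := Real.sqrt_le_sqrt hb2
        rwa [Real.sqrt_mul (by positivity), show Real.sqrt (C ^ 4) = C ^ 2 by
          rw [show C ^ 4 = (C ^ 2) ^ 2 by ring, Real.sqrt_sq (by positivity)]] at this
      exact mul_le_mul_of_nonneg_left this hL
    have hsq : Real.sqrt S * Real.sqrt S = S := Real.mul_self_sqrt hSnn
    calc ∑ j, (D z j - D z' j) * u j
        ≤ Real.sqrt (∑ j, (D z j - D z' j) ^ 2) * Real.sqrt S := h1
      _ ≤ (L * (C ^ 2 * Real.sqrt S)) * Real.sqrt S :=
          mul_le_mul_of_nonneg_right h2 (Real.sqrt_nonneg _)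
      _ = L * C ^ 2 * (Real.sqrt S * Real.sqrt S) := by ring
      _ = L * C ^ 2 * S := by rw [hsq]
  -- expand the sum
  have hexp : ∑ j, (F z j - F z' j) * u j
      = (1 / ρ - 1) * S + β * (∑ j, (z j - z' j) * u j)
        - β * (∑ j, (D z j - D z' j) * u j) := by
    rw [hS, Finset.mul_sum, Finset.mul_sum, Finset.mul_sum,
      ← Finset.sum_add_distrib, ← Finset.sum_sub_distrib]
    apply Finset.sum_congr rfl
    intro j _
    rw [hF z j, hF z' j, hu]
    ring
  have hmain : (1 / ρ - 1 + β * (ε ^ 2 - L * C ^ 2)) * S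
      ≤ ∑ j, (F z j - F z' j) * u j := by
    rw [hexp]
    have h1 : β * (ε ^ 2 * S) ≤ β * (∑ j, (z j - z' j) * u j) :=
      mul_le_mul_of_nonneg_left hbu hβ.le
    have h2 : β * (∑ j, (D z j - D z' j) * u j) ≤ β * (L * C ^ 2 * S) :=
      mul_le_mul_of_nonneg_left hau hβ.le
    nlinarith [h1, h2]
  have hcoef : (1 / ρ - 1 + β * (ε ^ 4 / C ^ 2 - L * C ^ 2)) * S
      ≤ (1 / ρ - 1 + β * (ε ^ 2 - L * C ^ 2)) * S := by
    apply mul_le_mul_of_nonneg_right _ hSnn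
    have : ε ^ 4 / C ^ 2 ≤ ε ^ 2 := by
      rw [div_le_iff₀ (by positivity)]
      have h2 : ε ^ 2 ≤ C ^ 2 := by nlinarith
      nlinarith [sq_nonneg ε, h2]
    nlinarith
  exact hcoef.trans hmain
end

section
/- Let n be a positive integer, let 0 < ε ≤ C, let ρ > 0, β > 0, L ≥ 0, let D : ℝ^n → ℝ^n be L-Lipschitz with respect to the Euclidean norm, and let c ∈ ℝ^n be a fixed vector. Let ∇φ(z) = (−1/z_1, …, −1/z_n) denote the gradient of the Burg entropy φ(z) = −∑_{j=1}^n log z_j on ℝ_{++}^n, and define F : [ε, C]^n → ℝ^n by F(z) = β (z − D(z)) + (1/ρ − 1) ∇φ(z) + c. Then for all z, z′ ∈ [ε, C]^n, ‖F(z) − F(z′)‖_2 ≤ M ‖∇φ(z) − ∇φ(z′)‖_2, where M = β (1 + L) C² + |1/ρ − 1|. -/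
open scoped BigOperators

/-- Verification of relative Lipschitz-smoothness (Assumption (A3)) for the
HRLwSGS algorithm with a RED potential: with
`F z = β (z - D z) + (1/ρ - 1) ∇φ(z) + c` and `∇φ(z) = (-1/z j)_j`, on the
box `[ε, C]^n` one has `‖F z - F z'‖₂ ≤ M ‖∇φ(z) - ∇φ(z')‖₂` with
`M = β (1 + L) C² + |1/ρ - 1|`. -/
theorem red_relative_lipschitz_smoothness
    (n : ℕ) (hn : 0 < n) (ε C : ℝ) (hε : 0 < ε) (hεC : ε ≤ C)
    (ρ β L : ℝ) (hρ : 0 < ρ) (hβ : 0 < β) (hL : 0 ≤ L)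
    (D : (Fin n → ℝ) → (Fin n → ℝ))
    (hD : ∀ a b : Fin n → ℝ,
      Real.sqrt (∑ j, (D a j - D b j) ^ 2)
        ≤ L * Real.sqrt (∑ j, (a j - b j) ^ 2))
    (c : Fin n → ℝ)
    (F : (Fin n → ℝ) → (Fin n → ℝ))
    (hF : ∀ z : Fin n → ℝ, ∀ j,
      F z j = β * (z j - D z j) + (1 / ρ - 1) * (-(1 / z j)) + c j)
    (z z' : Fin n → ℝ)
    (hz : ∀ j, z j ∈ Set.Icc ε C) (hz' : ∀ j, z' j ∈ Set.Icc ε C) :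
    Real.sqrt (∑ j, (F z j - F z' j) ^ 2)
      ≤ (β * (1 + L) * C ^ 2 + |1 / ρ - 1|)
        * Real.sqrt (∑ j, ((-(1 / z j)) - (-(1 / z' j))) ^ 2) := by
  have hC : 0 < C := lt_of_lt_of_le hε hεC
  set S : ℝ := Real.sqrt (∑ j, ((-(1 / z j)) - (-(1 / z' j))) ^ 2) with hS
  have hSnn : 0 ≤ S := Real.sqrt_nonneg _
  -- pointwise bound: (z j - z' j)^2 ≤ C^4 * g j ^2
  have key : ∀ j, (z j - z' j) ^ 2 ≤ C ^ 4 * ((-(1 / z j)) - (-(1 / z' j))) ^ 2 := by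
    intro j
    obtain ⟨h1, h2⟩ := hz j
    obtain ⟨h1', h2'⟩ := hz' j
    have hzj : 0 < z j := lt_of_lt_of_le hε h1
    have hzj' : 0 < z' j := lt_of_lt_of_le hε h1'
    have heq : z j - z' j = z j * z' j * ((-(1 / z j)) - (-(1 / z' j))) := by
      field_simp
      ring
    calc (z j - z' j) ^ 2
        = (z j * z' j) ^ 2 * ((-(1 / z j)) - (-(1 / z' j))) ^ 2 := by rw [heq]; ring
      _ ≤ C ^ 4 * ((-(1 / z j)) - (-(1 / z' j))) ^ 2 := by
          have hpos : 0 ≤ z j * z' j := le_of_lt (mul_pos hzj hzj')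
          have hle : z j * z' j ≤ C ^ 2 := by nlinarith
          have hsq : (z j * z' j) ^ 2 ≤ C ^ 4 := by nlinarith
          nlinarith [sq_nonneg ((-(1 / z j)) - (-(1 / z' j)))]
  -- sum bound
  have hzz' : Real.sqrt (∑ j, (z j - z' j) ^ 2) ≤ C ^ 2 * S := by
    have h1 : (∑ j, (z j - z' j) ^ 2) ≤ C ^ 4 * ∑ j, ((-(1 / z j)) - (-(1 / z' j))) ^ 2 := by
      rw [Finset.mul_sum]
      exact Finset.sum_le_sum fun j _ => key j
    calc Real.sqrt (∑ j, (z j - z' j) ^ 2)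
        ≤ Real.sqrt (C ^ 4 * ∑ j, ((-(1 / z j)) - (-(1 / z' j))) ^ 2) :=
          Real.sqrt_le_sqrt h1
      _ = C ^ 2 * S := by
          rw [hS, Real.sqrt_mul (by positivity)]
          congr 1
          rw [show (C:ℝ) ^ 4 = (C ^ 2) ^ 2 by ring, Real.sqrt_sq (by positivity)]
  -- decompose via euclidean norms
  have norm_eq : ∀ v : EuclideanSpace ℝ (Fin n),
      ‖v‖ = Real.sqrt (∑ j, v j ^ 2) := by
    intro v
    rw [EuclideanSpace.norm_eq]
    congr 1
    exact Finset.sum_congr rfl fun j _ => by rw [Real.norm_eq_abs, sq_abs]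
  set a : EuclideanSpace ℝ (Fin n) := WithLp.toLp 2 (fun j => β * (z j - z' j)) with ha
  set b : EuclideanSpace ℝ (Fin n) := WithLp.toLp 2 (fun j => -(β * (D z j - D z' j))) with hb
  set d : EuclideanSpace ℝ (Fin n) := WithLp.toLp 2 (fun j => (1 / ρ - 1) * ((-(1 / z j)) - (-(1 / z' j)))) with hd
  have hdecomp : (fun j => F z j - F z' j) = (fun j => a j + b j + d j) := by
    funext j
    rw [hF z j, hF z' j, ha, hb, hd]
    ring
  have htri : Real.sqrt (∑ j, (F z j - F z' j) ^ 2) ≤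
      Real.sqrt (∑ j, a j ^ 2) + Real.sqrt (∑ j, b j ^ 2) + Real.sqrt (∑ j, d j ^ 2) := by
    have h0 := norm_add₃_le (a := a) (b := b) (c := d)
    rw [norm_eq a, norm_eq b, norm_eq d, norm_eq (a + b + d)] at h0
    have h2 : (∑ j, (F z j - F z' j) ^ 2) = ∑ j, ((a + b + d) j) ^ 2 :=
      Finset.sum_congr rfl fun j _ => by rw [congrFun hdecomp j]; rfl
    rw [h2]
    exact h0
  -- bound each term
  have hnn : (0:ℝ) ≤ β := le_of_lt hβ
  have hA : Real.sqrt (∑ j, a j ^ 2) ≤ β * C ^ 2 * S := by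
    have : ∀ j, a j ^ 2 = β ^ 2 * (z j - z' j) ^ 2 := fun j => by rw [ha]; ring
    calc Real.sqrt (∑ j, a j ^ 2)
        = Real.sqrt (β ^ 2 * ∑ j, (z j - z' j) ^ 2) := by
          rw [Finset.mul_sum]; congr 1; exact Finset.sum_congr rfl fun j _ => this j
      _ = β * Real.sqrt (∑ j, (z j - z' j) ^ 2) := by
          rw [Real.sqrt_mul (by positivity), Real.sqrt_sq hnn]
      _ ≤ β * (C ^ 2 * S) := by
          exact mul_le_mul_of_nonneg_left hzz' hnn
      _ = β * C ^ 2 * S := by ring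
  have hB : Real.sqrt (∑ j, b j ^ 2) ≤ β * L * C ^ 2 * S := by
    have heq : ∀ j, b j ^ 2 = β ^ 2 * (D z j - D z' j) ^ 2 := fun j => by rw [hb]; ring
    calc Real.sqrt (∑ j, b j ^ 2)
        = Real.sqrt (β ^ 2 * ∑ j, (D z j - D z' j) ^ 2) := by
          rw [Finset.mul_sum]; congr 1; exact Finset.sum_congr rfl fun j _ => heq j
      _ = β * Real.sqrt (∑ j, (D z j - D z' j) ^ 2) := by
          rw [Real.sqrt_mul (by positivity), Real.sqrt_sq hnn]
      _ ≤ β * (L * Real.sqrt (∑ j, (z j - z' j) ^ 2)) :=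
          mul_le_mul_of_nonneg_left (hD z z') hnn
      _ ≤ β * (L * (C ^ 2 * S)) := by
          apply mul_le_mul_of_nonneg_left _ hnn
          exact mul_le_mul_of_nonneg_left hzz' hL
      _ = β * L * C ^ 2 * S := by ring
  have hDd : Real.sqrt (∑ j, d j ^ 2) = |1 / ρ - 1| * S := by
    have heq : ∀ j, d j ^ 2 = (1 / ρ - 1) ^ 2 * ((-(1 / z j)) - (-(1 / z' j))) ^ 2 :=
      fun j => by rw [hd]; ring
    calc Real.sqrt (∑ j, d j ^ 2)
        = Real.sqrt ((1 / ρ - 1) ^ 2 * ∑ j, ((-(1 / z j)) - (-(1 / z' j))) ^ 2) := by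
          rw [Finset.mul_sum]; congr 1; exact Finset.sum_congr rfl fun j _ => heq j
      _ = |1 / ρ - 1| * S := by
          rw [Real.sqrt_mul (by positivity), Real.sqrt_sq_eq_abs, hS]
  calc Real.sqrt (∑ j, (F z j - F z' j) ^ 2)
      ≤ Real.sqrt (∑ j, a j ^ 2) + Real.sqrt (∑ j, b j ^ 2) + Real.sqrt (∑ j, d j ^ 2) := htri
    _ ≤ β * C ^ 2 * S + β * L * C ^ 2 * S + |1 / ρ - 1| * S :=
        add_le_add (add_le_add hA hB) hDd.le
    _ = (β * (1 + L) * C ^ 2 + |1 / ρ - 1|) * S := by ring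
end
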